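/- Let (Ω,𝓕,ℙ) be a probability space, d ∈ ℕ, X := L²(Ω;ℝ^d), and let a < b be reals. Let fₙ : [a,b] → X be a sequence of functions such that for some constants C, L > 0: ‖fₙ(t)‖ ≤ C for all n and t ∈ [a,b], and ‖fₙ(t) − fₙ(s)‖ ≤ L·|t−s| for all n and s,t ∈ [a,b]. Then there exist a subsequence f_{n_k} and a function f : [a,b] → X with ‖f(t) − f(s)‖ ≤ L·|t−s| for all s,t ∈ [a,b], such that for every t ∈ [a,b] and every sequence t_k → t in [a,b], f_{n_k}(t_k) converges weakly in X to f(t). -/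

import Mathlib

open MeasureTheory Filter Topology Bornology

/-- The state space `X = L²(Ω; ℝ^d)`. -/
noncomputable abbrev L2Space (Ω : Type*) [MeasurableSpace Ω] (ℙ : Measure Ω) (d : ℕ) :=
  Lp (α := Ω) (EuclideanSpace ℝ (Fin d)) 2 ℙ

/-- Weak convergence of a sequence in a normed real vector space. -/
def WeakTendsto {E : Type*} [NormedAddCommGroup E] [NormedSpace ℝ E]
    (x : ℕ → E) (l : E) : Prop :=
  Filter.Tendsto (fun n => toWeakSpace ℝ E (x n)) Filter.atTop (nhds (toWeakSpace ℝ E l))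

section AuxWAA
open RealInnerProductSpace
/-- A real sequence uniformly approximable by Cauchy sequences is Cauchy. -/
lemma cauchySeq_of_approx (S : ℕ → ℝ)
    (h : ∀ ε > 0, ∃ c : ℕ → ℝ, CauchySeq c ∧ ∀ k, |S k - c k| ≤ ε) : CauchySeq S := by
  rw [Metric.cauchySeq_iff]
  intro ε hε
  obtain ⟨c, hc, hSc⟩ := h (ε / 4) (by linarith)
  rw [Metric.cauchySeq_iff] at hc
  obtain ⟨N, hN⟩ := hc (ε / 4) (by linarith)
  refine ⟨N, fun m hm n hn => ?_⟩
  have h1 := hSc m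
  have h2 := hSc n
  have h3 := hN m hm n hn
  rw [Real.dist_eq] at h3 ⊢
  have t1 : |S m - S n| ≤ |S m - c m| + |c m - S n| := abs_sub_le _ _ _
  have t2 : |c m - S n| ≤ |c m - c n| + |c n - S n| := abs_sub_le _ _ _
  have t3 : |c n - S n| = |S n - c n| := abs_sub_comm _ _
  linarith

lemma weak_aa_hilbert {X : Type*} [NormedAddCommGroup X] [InnerProductSpace ℝ X]
    [CompleteSpace X]
    (a b : ℝ) (hab : a ≤ b) (f : ℕ → ℝ → X) (C L : ℝ) (hC : 0 < C) (hL : 0 < L)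
    (hbdd : ∀ n : ℕ, ∀ t ∈ Set.Icc a b, ‖f n t‖ ≤ C)
    (hlip : ∀ n : ℕ, ∀ s ∈ Set.Icc a b, ∀ t ∈ Set.Icc a b, ‖f n t - f n s‖ ≤ L * |t - s|) :
    ∃ ψ : ℕ → ℕ, StrictMono ψ ∧ ∃ g : ℝ → X,
      (∀ s ∈ Set.Icc a b, ∀ t ∈ Set.Icc a b, ‖g t - g s‖ ≤ L * |t - s|) ∧
      ∀ t ∈ Set.Icc a b, ∀ tk : ℕ → ℝ, (∀ k, tk k ∈ Set.Icc a b) →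
        Filter.Tendsto tk Filter.atTop (nhds t) →
        (∀ w : X, Filter.Tendsto (fun k => ⟪f (ψ k) (tk k), w⟫) Filter.atTop
          (nhds ⟪g t, w⟫)) := by
  -- a dense sequence in [a,b]
  haveI : Nonempty (Set.Icc a b) := (Set.nonempty_Icc.mpr hab).to_subtype
  set u : ℕ → ℝ := fun j => (TopologicalSpace.denseSeq (Set.Icc a b) j : ℝ) with hu
  have humem : ∀ j, u j ∈ Set.Icc a b := fun j => (TopologicalSpace.denseSeq (Set.Icc a b) j).2
  have hudense : ∀ t ∈ Set.Icc a b, ∀ ε > 0, ∃ j, |t - u j| < ε := by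
    intro t ht ε hε
    have hd := TopologicalSpace.denseRange_denseSeq (Set.Icc a b)
    rw [Metric.denseRange_iff] at hd
    obtain ⟨j, hj⟩ := hd ⟨t, ht⟩ ε hε
    refine ⟨j, ?_⟩
    rwa [Subtype.dist_eq, Real.dist_eq] at hj
  -- the separable closed subspace containing all values
  set v : ℕ × ℕ → X := fun p => f p.1 (u p.2) with hv
  set Y : Submodule ℝ X := (Submodule.span ℝ (Set.range v)).topologicalClosure with hY
  have hYclosed : IsClosed (Y : Set X) := Submodule.isClosed_topologicalClosure _
  have hYsep : TopologicalSpace.IsSeparable (Y : Set X) := by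
    have h1 : TopologicalSpace.IsSeparable (Set.range v) :=
      (Set.countable_range v).isSeparable
    have h2 := h1.span (R := ℝ)
    have h3 := h2.closure
    rwa [hY, Submodule.topologicalClosure_coe]
  obtain ⟨c, hc_count, hc_sub⟩ := hYsep
  obtain ⟨y, hy⟩ := (hc_count.insert 0).exists_eq_range ⟨0, Set.mem_insert 0 c⟩
  have hYy : (Y : Set X) ⊆ closure (Set.range y) :=
    hc_sub.trans (closure_mono (by rw [← hy]; exact Set.subset_insert _ _))
  have hfY : ∀ n : ℕ, ∀ t ∈ Set.Icc a b, f n t ∈ Y := by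
    intro n t ht
    have h1 : f n t ∈ closure (Set.range v) := by
      rw [Metric.mem_closure_iff]
      intro ε hε
      obtain ⟨j, hj⟩ := hudense t ht (ε / L) (div_pos hε hL)
      refine ⟨v (n, j), Set.mem_range_self _, ?_⟩
      have : dist (f n t) (v (n, j)) = ‖f n t - f n (u j)‖ := dist_eq_norm _ _
      rw [this]
      calc ‖f n t - f n (u j)‖ ≤ L * |t - u j| := hlip n (u j) (humem j) t ht
        _ < L * (ε / L) := by exact mul_lt_mul_of_pos_left hj hL
        _ = ε := mul_div_cancel₀ ε hL.ne'
    have h2 : closure (Set.range v) ⊆ (Y : Set X) := by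
      rw [hY, Submodule.topologicalClosure_coe]
      exact closure_mono Submodule.subset_span
    exact h2 h1
  -- orthogonal projection onto Y
  haveI : CompleteSpace Y := hYclosed.completeSpace_coe
  have hproj : ∀ x ∈ Y, ∀ w : X, ⟪x, w⟫ = ⟪x, (Y.orthogonalProjectionOnto w : X)⟫ := by
    intro x hx w
    have h1 : w - Y.orthogonalProjectionOnto w ∈ Yᗮ := Submodule.sub_starProjection_mem_orthogonal (K := Y) w
    have h2 : ⟪x, w - (Y.orthogonalProjectionOnto w : X)⟫ = 0 :=
      (Submodule.mem_orthogonal Y _).mp h1 x hx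
    rw [inner_sub_right] at h2
    linarith
  -- diagonal extraction via compactness of a countable product of intervals
  set F : ℕ → (ℕ × ℕ) → ℝ := fun n p => ⟪f n (u p.1), y p.2⟫ with hF
  have hFmem : ∀ n, F n ∈ Set.univ.pi
      (fun p : ℕ × ℕ => Set.Icc (-(C * ‖y p.2‖)) (C * ‖y p.2‖)) := by
    intro n p _
    have h1 : |F n p| ≤ C * ‖y p.2‖ := by
      refine (abs_real_inner_le_norm _ _).trans ?_
      exact mul_le_mul_of_nonneg_right (hbdd n _ (humem _)) (norm_nonneg _)
    exact abs_le.mp h1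
  obtain ⟨α, -, ψ, hψ, hα⟩ :=
    (isCompact_univ_pi (fun p : ℕ × ℕ => isCompact_Icc)).tendsto_subseq hFmem
  have hαp : ∀ p : ℕ × ℕ, Tendsto (fun k => F (ψ k) p) atTop (𝓝 (α p)) := by
    rw [tendsto_pi_nhds] at hα
    exact fun p => hα p
  -- the Cauchy property at each time and test vector
  have hCauchy : ∀ t ∈ Set.Icc a b, ∀ w : X, CauchySeq (fun k => ⟪f (ψ k) t, w⟫) := by
    intro t ht w
    apply cauchySeq_of_approx
    intro ε hε
    set w' : X := (Y.orthogonalProjectionOnto w : X) with hw'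
    have hd1 : (0:ℝ) < ε / (2 * (L * ‖w'‖ + 1)) := by positivity
    obtain ⟨j, hj⟩ := hudense t ht _ hd1
    have hw'mem : w' ∈ closure (Set.range y) := hYy (Y.orthogonalProjectionOnto w).2
    rw [Metric.mem_closure_iff] at hw'mem
    obtain ⟨z, hz, hzd⟩ := hw'mem (ε / (2 * C)) (by positivity)
    obtain ⟨m, rfl⟩ := hz
    refine ⟨fun k => F (ψ k) (j, m), (hαp (j, m)).cauchySeq, fun k => ?_⟩
    set n := ψ k
    have e1 : ⟪f n t, w⟫ = ⟪f n t, w'⟫ := hproj _ (hfY n t ht) w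
    have e2 : ⟪f n t, w'⟫ - ⟪f n (u j), y m⟫
        = ⟪f n t - f n (u j), w'⟫ + ⟪f n (u j), w' - y m⟫ := by
      rw [inner_sub_left, inner_sub_right]; ring
    have b1 : |⟪f n t - f n (u j), w'⟫| ≤ ε / 2 := by
      refine (abs_real_inner_le_norm _ _).trans ?_
      have h1 : ‖f n t - f n (u j)‖ ≤ L * |t - u j| := hlip n (u j) (humem j) t ht
      have h2 : ‖f n t - f n (u j)‖ * ‖w'‖ ≤ (L * (ε / (2 * (L * ‖w'‖ + 1)))) * ‖w'‖ := by
        refine mul_le_mul_of_nonneg_right (h1.trans ?_) (norm_nonneg _)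
        exact mul_le_mul_of_nonneg_left hj.le hL.le
      refine h2.trans ?_
      have hr : L * (ε / (2 * (L * ‖w'‖ + 1))) * ‖w'‖
          = ε * (L * ‖w'‖) / (2 * (L * ‖w'‖ + 1)) := by ring
      rw [hr, div_le_div_iff₀ (by positivity) (by norm_num)]
      nlinarith [hε.le, mul_nonneg hL.le (norm_nonneg w')]
    have b2 : |⟪f n (u j), w' - y m⟫| ≤ ε / 2 := by
      refine (abs_real_inner_le_norm _ _).trans ?_
      have h1 : ‖w' - y m‖ ≤ ε / (2 * C) := by
        rw [dist_eq_norm] at hzd; exact hzd.le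
      calc ‖f n (u j)‖ * ‖w' - y m‖ ≤ C * (ε / (2 * C)) := by
            refine mul_le_mul (hbdd n _ (humem j)) h1 (norm_nonneg _) hC.le
        _ = ε / 2 := by field_simp
    calc |⟪f n t, w⟫ - F n (j, m)| = |⟪f n t - f n (u j), w'⟫ + ⟪f n (u j), w' - y m⟫| := by
          rw [hF]; simp only []; rw [e1, ← e2]
      _ ≤ |⟪f n t - f n (u j), w'⟫| + |⟪f n (u j), w' - y m⟫| := abs_add_le _ _
      _ ≤ ε / 2 + ε / 2 := add_le_add b1 b2
      _ = ε := by ring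
  -- the clamped limit functional
  set τ : ℝ → ℝ := fun t => max a (min t b) with hτ
  have hτmem : ∀ t, τ t ∈ Set.Icc a b := fun t =>
    ⟨le_max_left _ _, max_le hab (min_le_right _ _)⟩
  have hτeq : ∀ t ∈ Set.Icc a b, τ t = t := by
    intro t ht
    rw [hτ]
    simp only []
    rw [min_eq_left ht.2, max_eq_right ht.1]
  set lφ : ℝ → X → ℝ := fun t w => limUnder atTop (fun k => ⟪f (ψ k) (τ t), w⟫) with hlφ
  have htend : ∀ t w, Tendsto (fun k => ⟪f (ψ k) (τ t), w⟫) atTop (𝓝 (lφ t w)) :=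
    fun t w => (hCauchy (τ t) (hτmem t) w).tendsto_limUnder
  have hboundφ : ∀ t w, |lφ t w| ≤ C * ‖w‖ := by
    intro t w
    refine le_of_tendsto (htend t w).abs (Filter.Eventually.of_forall fun k => ?_)
    refine (abs_real_inner_le_norm _ _).trans ?_
    exact mul_le_mul_of_nonneg_right (hbdd _ _ (hτmem t)) (norm_nonneg _)
  have haddφ : ∀ t w w', lφ t (w + w') = lφ t w + lφ t w' := by
    intro t w w'
    have h2 : Tendsto (fun k => ⟪f (ψ k) (τ t), w + w'⟫) atTop (𝓝 (lφ t w + lφ t w')) := by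
      simpa only [inner_add_right] using (htend t w).add (htend t w')
    exact tendsto_nhds_unique (htend t (w + w')) h2
  have hsmulφ : ∀ t (r : ℝ) w, lφ t (r • w) = r * lφ t w := by
    intro t r w
    have h2 : Tendsto (fun k => ⟪f (ψ k) (τ t), r • w⟫) atTop (𝓝 (r * lφ t w)) := by
      simpa only [real_inner_smul_right] using (htend t w).const_mul r
    exact tendsto_nhds_unique (htend t (r • w)) h2
  set Φ : ℝ → X →L[ℝ] ℝ := fun t => LinearMap.mkContinuous
    { toFun := lφ t, map_add' := haddφ t, map_smul' := fun r w => by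
        simpa [smul_eq_mul] using hsmulφ t r w } C
    (fun w => by simpa [Real.norm_eq_abs] using hboundφ t w) with hΦ
  set g : ℝ → X := fun t => (InnerProductSpace.toDual ℝ X).symm (Φ t) with hg
  have hgw : ∀ t w, Tendsto (fun k => ⟪f (ψ k) (τ t), w⟫) atTop (𝓝 ⟪g t, w⟫) := by
    intro t w
    have h1 : ⟪g t, w⟫ = Φ t w := by
      rw [hg]
      simp only []
      rw [← InnerProductSpace.toDual_apply_apply, LinearIsometryEquiv.apply_symm_apply]
    rw [h1]
    exact htend t w
  have hgt : ∀ t ∈ Set.Icc a b, ∀ w,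
      Tendsto (fun k => ⟪f (ψ k) t, w⟫) atTop (𝓝 ⟪g t, w⟫) := by
    intro t ht w
    have h := hgw t w
    rwa [hτeq t ht] at h
  refine ⟨ψ, hψ, g, ?_, ?_⟩
  · intro s hs t ht
    set V := g t - g s with hV
    have h1 : Tendsto (fun k => ⟪f (ψ k) t, V⟫ - ⟪f (ψ k) s, V⟫) atTop
        (𝓝 (⟪g t, V⟫ - ⟪g s, V⟫)) := (hgt t ht V).sub (hgt s hs V)
    have h2 : ⟪g t, V⟫ - ⟪g s, V⟫ = ‖V‖ ^ 2 := by
      rw [← inner_sub_left, ← hV, real_inner_self_eq_norm_sq]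
    rw [h2] at h1
    have h3 : ‖V‖ ^ 2 ≤ L * |t - s| * ‖V‖ := by
      refine le_of_tendsto h1 (Filter.Eventually.of_forall fun k => ?_)
      have e : ⟪f (ψ k) t, V⟫ - ⟪f (ψ k) s, V⟫ = ⟪f (ψ k) t - f (ψ k) s, V⟫ :=
        (inner_sub_left _ _ _).symm
      rw [e]
      refine (le_abs_self _).trans ((abs_real_inner_le_norm _ _).trans ?_)
      exact mul_le_mul_of_nonneg_right (hlip _ s hs t ht) (norm_nonneg _)
    rcases eq_or_lt_of_le (norm_nonneg V) with h0 | h0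
    · rw [← h0]
      positivity
    · nlinarith [h3]
  · intro t ht tk htk htkt w
    have hbase := hgt t ht w
    have hdiff : Tendsto (fun k => ⟪f (ψ k) (tk k), w⟫ - ⟪f (ψ k) t, w⟫) atTop (𝓝 0) := by
      have hb : ∀ k, ‖⟪f (ψ k) (tk k), w⟫ - ⟪f (ψ k) t, w⟫‖ ≤ L * ‖w‖ * |tk k - t| := by
        intro k
        rw [Real.norm_eq_abs, ← inner_sub_left]
        refine (abs_real_inner_le_norm _ _).trans ?_
        have hl := hlip (ψ k) t ht (tk k) (htk k)
        calc ‖f (ψ k) (tk k) - f (ψ k) t‖ * ‖w‖ ≤ (L * |tk k - t|) * ‖w‖ :=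
              mul_le_mul_of_nonneg_right hl (norm_nonneg _)
          _ = L * ‖w‖ * |tk k - t| := by ring
      refine squeeze_zero_norm hb ?_
      have h1 : Tendsto (fun k => |tk k - t|) atTop (𝓝 0) := by
        have h2 := (htkt.sub_const t).abs
        simpa using h2
      have h3 := h1.const_mul (L * ‖w‖)
      simpa using h3
    have hsum := hdiff.add hbase
    simpa using hsum

lemma weakTendsto_of_inner {X : Type*} [NormedAddCommGroup X] [InnerProductSpace ℝ X]
    [CompleteSpace X] (x : ℕ → X) (l : X)
    (h : ∀ w : X, Tendsto (fun k => ⟪x k, w⟫) atTop (𝓝 ⟪l, w⟫)) :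
    Tendsto (fun n => toWeakSpace ℝ X (x n)) atTop (𝓝 (toWeakSpace ℝ X l)) := by
  have hinj : Function.Injective ((topDualPairing ℝ X).flip) := by
    intro p q hpq
    have h2 : ∀ φ : X →L[ℝ] ℝ, φ p = φ q := by
      intro φ
      have h3 := LinearMap.congr_fun hpq φ
      simpa [topDualPairing_apply] using h3
    have h3 := h2 (InnerProductSpace.toDual ℝ X (p - q))
    rw [InnerProductSpace.toDual_apply_apply, InnerProductSpace.toDual_apply_apply] at h3
    have h4 : ⟪p - q, p - q⟫ = 0 := by
      rw [inner_sub_right]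
      exact sub_eq_zero_of_eq h3
    exact sub_eq_zero.mp (inner_self_eq_zero.mp h4)
  refine (WeakBilin.tendsto_iff_forall_eval_tendsto _ hinj).mpr ?_
  intro φ
  show Tendsto (fun i => φ (x i)) atTop (𝓝 (φ l))
  set z := (InnerProductSpace.toDual ℝ X).symm φ with hz
  have hφ : ∀ p : X, φ p = ⟪z, p⟫ := by
    intro p
    rw [← InnerProductSpace.toDual_apply_apply (𝕜 := ℝ), hz, LinearIsometryEquiv.apply_symm_apply]
  have he : (fun i => φ (x i)) = fun i => ⟪x i, z⟫ :=
    funext fun i => (hφ _).trans (real_inner_comm _ _)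
  rw [he, hφ l, real_inner_comm l z]
  exact h z

end AuxWAA

/-- Weak Arzelà–Ascoli theorem for uniformly bounded, equi-Lipschitz
sequences of functions `[a,b] → L²(Ω;ℝ^d)`. -/
theorem weak_arzela_ascoli
    {Ω : Type*} [MeasurableSpace Ω] (ℙ : Measure Ω) [IsProbabilityMeasure ℙ] (d : ℕ)
    (a b : ℝ) (hab : a < b) (f : ℕ → ℝ → L2Space Ω ℙ d) (C L : ℝ) (hC : 0 < C) (hL : 0 < L)
    (hbdd : ∀ n : ℕ, ∀ t ∈ Set.Icc a b, ‖f n t‖ ≤ C)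
    (hlip : ∀ n : ℕ, ∀ s ∈ Set.Icc a b, ∀ t ∈ Set.Icc a b, ‖f n t - f n s‖ ≤ L * |t - s|) :
    ∃ ψ : ℕ → ℕ, StrictMono ψ ∧ ∃ g : ℝ → L2Space Ω ℙ d,
      (∀ s ∈ Set.Icc a b, ∀ t ∈ Set.Icc a b, ‖g t - g s‖ ≤ L * |t - s|) ∧
      ∀ t ∈ Set.Icc a b, ∀ tk : ℕ → ℝ, (∀ k, tk k ∈ Set.Icc a b) →
        Filter.Tendsto tk Filter.atTop (nhds t) →
        WeakTendsto (fun k => f (ψ k) (tk k)) (g t) := by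
  obtain ⟨ψ, hψ, g, hglip, hgconv⟩ := weak_aa_hilbert a b hab.le f C L hC hL hbdd hlip
  exact ⟨ψ, hψ, g, hglip, fun t ht tk htk htkt =>
    weakTendsto_of_inner _ _ (hgconv t ht tk htk htkt)⟩
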